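/- Let G be a {C₃, C₄}-free graph (no cycle of length 3 or 4 as a subgraph) with maximum degree at most 3 and vertex weights a*, d*: V(G) → {0,1}. Then (G, a*, d*) admits a solution to (1,1)-Cluster Editing if and only if there exists a matching D of deletable edges of G such that every connected component C of G − D is isomorphic to P₁, P₂, or P₃, and if C ≅ P₃ then the two endpoints u, w of the path satisfy a*(u)=a*(w)=1 (note u and w are non-adjacent in G since G is triangle-free). -/

import Mathlib

open SimpleGraph

variable {V : Type*}

/-- A graph whose edge set is a matching: every vertex has at most one neighbour. -/
def IsMatchingGraph (M : SimpleGraph V) : Prop :=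
  ∀ ⦃v w w' : V⦄, M.Adj v w → M.Adj v w' → w = w'

/-- A cluster graph: every connected component is a complete graph. -/
def IsClusterGraph (G : SimpleGraph V) : Prop :=
  ∀ ⦃u v w : V⦄, G.Adj u v → G.Adj v w → u ≠ w → G.Adj u w

/-- No `C₃` (triangle) subgraph. -/
def TriangleFree (G : SimpleGraph V) : Prop :=
  ∀ ⦃u v w : V⦄, G.Adj u v → G.Adj v w → G.Adj u w → False

/-- No `C₄` subgraph. -/
def C4Free (G : SimpleGraph V) : Prop :=
  ∀ ⦃p q r s : V⦄, p ≠ r → q ≠ s →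
    G.Adj p q → G.Adj q r → G.Adj r s → G.Adj s p → False

/-- Degree of a vertex (as the cardinality of its neighbourhood). -/
noncomputable def ndeg (G : SimpleGraph V) (v : V) : ℕ := {w | G.Adj v w}.ncard

/-- Maximum degree at most `n`. -/
def MaxDegLE (G : SimpleGraph V) (n : ℕ) : Prop := ∀ v, ndeg G v ≤ n

/-- `D` is a matching of deletable edges of `G` (w.r.t. weights `d`). -/
def DelMatching (G D : SimpleGraph V) (d : V → ℕ) : Prop :=
  D ≤ G ∧ IsMatchingGraph D ∧ ∀ ⦃u v : V⦄, D.Adj u v → d u = 1 ∧ d v = 1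

/-- `A` is a matching of addable edges of the complement of `G` (w.r.t. weights `a`). -/
def AddMatching (G A : SimpleGraph V) (a : V → ℕ) : Prop :=
  A ≤ Gᶜ ∧ IsMatchingGraph A ∧ ∀ ⦃u v : V⦄, A.Adj u v → a u = 1 ∧ a v = 1

/-- `(G, a, d)` is a YES-instance of `(1,1)`-Cluster Editing (matching formulation). -/
def HasSolution (G : SimpleGraph V) (a d : V → ℕ) : Prop :=
  ∃ D A : SimpleGraph V, DelMatching G D d ∧ AddMatching G A a ∧
    IsClusterGraph ((G \ D) ⊔ A)

/-- The component `c` of `H` is a `P₁` (single vertex). -/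
def P1Comp (H : SimpleGraph V) (c : H.ConnectedComponent) : Prop :=
  ∃ v : V, c.supp = {v}

/-- The component `c` of `H` is a `P₂` (a single edge). -/
def P2Comp (H : SimpleGraph V) (c : H.ConnectedComponent) : Prop :=
  ∃ u v : V, H.Adj u v ∧ c.supp = {u, v}

/-- The component `c` of `H` is a path `u - m - w` on three vertices. -/
def P3Comp (H : SimpleGraph V) (c : H.ConnectedComponent) (u m w : V) : Prop :=
  H.Adj u m ∧ H.Adj m w ∧ u ≠ w ∧ ¬ H.Adj u w ∧ c.supp = {u, m, w}

/-- The component `c` of `H` is a chordless cycle `p - q - r - s - p` on four vertices. -/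
def C4Comp (H : SimpleGraph V) (c : H.ConnectedComponent) (p q r s : V) : Prop :=
  H.Adj p q ∧ H.Adj q r ∧ H.Adj r s ∧ H.Adj s p ∧ p ≠ r ∧ q ≠ s ∧
    ¬ H.Adj p r ∧ ¬ H.Adj q s ∧ c.supp = {p, q, r, s}

/-- Every connected component of `H` is isomorphic to `P₁`, `P₂`, `P₃` or `C₄`. -/
def GoodComponents (H : SimpleGraph V) : Prop :=
  ∀ c : H.ConnectedComponent,
    P1Comp H c ∨ P2Comp H c ∨ (∃ u m w, P3Comp H c u m w) ∨
      (∃ p q r s, C4Comp H c p q r s)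

/-- `G` contains `K_{2,3}` as a subgraph. -/
def ContainsK23 (G : SimpleGraph V) : Prop :=
  ∃ x₁ x₂ y₁ y₂ y₃ : V, x₁ ≠ x₂ ∧ y₁ ≠ y₂ ∧ y₁ ≠ y₃ ∧ y₂ ≠ y₃ ∧
    G.Adj x₁ y₁ ∧ G.Adj x₁ y₂ ∧ G.Adj x₁ y₃ ∧ G.Adj x₂ y₁ ∧ G.Adj x₂ y₂ ∧ G.Adj x₂ y₃

/-!
Write `H = G \ D`. A solution `(D, A)` makes `H ⊔ A` a cluster graph, so every component of `H`
is a clique of `H ⊔ A`. As `A` is a matching, each vertex of the component is `H`-adjacent to all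
other vertices but at most one; since `H` has neither triangles nor 4-cycles, the component has at
most three vertices, and on three vertices it is a path `u - m - w` whose missing edge `uw` lies in
`A`, whence `a u = a w = 1`. Conversely, adding the edge `uw` for every such path completes each
component of `H` to a clique; these edges form a matching, and none of them lies in `G` because
`G` is triangle-free.
-/

lemma TriangleFree.mono {G H : SimpleGraph V} (hHG : H ≤ G) (hG : TriangleFree G) :
    TriangleFree H :=
  fun _ _ _ huv hvw huw => hG (hHG huv) (hHG hvw) (hHG huw)

lemma C4Free.mono {G H : SimpleGraph V} (hHG : H ≤ G) (hG : C4Free G) : C4Free H :=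
  fun _ _ _ _ hpr hqs hpq hqr hrs hsp => hG hpr hqs (hHG hpq) (hHG hqr) (hHG hrs) (hHG hsp)

lemma IsClusterGraph.adj_of_reachable {K : SimpleGraph V} (hK : IsClusterGraph K) {u v : V}
    (h : K.Reachable u v) (hne : u ≠ v) : K.Adj u v := by
  obtain ⟨p⟩ := h
  induction p with
  | nil => exact absurd rfl hne
  | @cons x y z hxy p ih =>
    by_cases hyz : y = z
    · exact hyz ▸ hxy
    · exact hK hxy (ih hyz) hne

lemma isClusterGraph_fromRel_reachable (H : SimpleGraph V) :
    IsClusterGraph (fromRel H.Reachable) := by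
  intro u v w huv hvw huw
  rw [fromRel_adj] at *
  have hr : ∀ {x y : V}, H.Reachable x y ∨ H.Reachable y x → H.Reachable x y :=
    fun h => h.elim id .symm
  exact ⟨huw, .inl ((hr huv.2).trans (hr hvw.2))⟩

lemma SimpleGraph.ConnectedComponent.adj_of_supp_eq_pair {H : SimpleGraph V}
    {c : H.ConnectedComponent} {u v : V} (hc : c.supp = {u, v}) (hne : u ≠ v) : H.Adj u v := by
  have hu : u ∈ c.supp := hc ▸ Set.mem_insert u {v}
  have hv : v ∈ c.supp := hc ▸ Set.mem_insert_of_mem u rfl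
  obtain ⟨p⟩ := ConnectedComponent.exact (hu.trans hv.symm)
  cases p with
  | nil => exact absurd rfl hne
  | @cons _ y _ huy p =>
    have hy : y ∈ c.supp := (ConnectedComponent.sound ⟨p⟩).trans hv
    rcases hc ▸ hy with rfl | rfl
    · exact absurd huy H.irrefl
    · exact huy

lemma Set.eq_singleton_or_pair_or_triple {S : Set V} {v : V} (hv : v ∈ S)
    (h4 : ∀ x ∈ S, ∀ y ∈ S, ∀ z ∈ S, ∀ w ∈ S,
      x ≠ y → x ≠ z → x ≠ w → y ≠ z → y ≠ w → z ≠ w → False) :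
    S = {v} ∨ (∃ x, v ≠ x ∧ S = {v, x}) ∨ ∃ x y, v ≠ x ∧ v ≠ y ∧ x ≠ y ∧ S = {v, x, y} := by
  by_cases h2 : ∃ x ∈ S, x ≠ v
  swap
  · push Not at h2
    exact .inl (Set.eq_singleton_iff_unique_mem.2 ⟨hv, h2⟩)
  obtain ⟨x, hx, hxv⟩ := h2
  by_cases h3 : ∃ y ∈ S, y ≠ v ∧ y ≠ x
  swap
  · push Not at h3
    refine .inr (.inl ⟨x, hxv.symm, subset_antisymm (fun z hz => ?_)
      (Set.insert_subset hv (Set.singleton_subset_iff.2 hx))⟩)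
    by_cases hzv : z = v
    · exact .inl hzv
    · exact .inr (h3 z hz hzv)
  obtain ⟨y, hy, hyv, hyx⟩ := h3
  refine .inr (.inr ⟨x, y, hxv.symm, hyv.symm, hyx.symm, subset_antisymm (fun z hz => ?_)
    (Set.insert_subset hv (Set.insert_subset hx (Set.singleton_subset_iff.2 hy)))⟩)
  by_contra hz'
  simp only [Set.mem_insert_iff, Set.mem_singleton_iff, not_or] at hz'
  exact h4 v hv x hx y hy z hz hxv.symm hyv.symm (Ne.symm hz'.1) hyx.symm (Ne.symm hz'.2.1)
    (Ne.symm hz'.2.2)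

section SupMatching

variable {H A : SimpleGraph V}

lemma IsMatchingGraph.adj_or_adj_of_sup (hA : IsMatchingGraph A) {x y z : V}
    (hxy : (H ⊔ A).Adj x y) (hxz : (H ⊔ A).Adj x z) (hyz : y ≠ z) : H.Adj x y ∨ H.Adj x z := by
  rcases hxy with hxy | hxy
  · exact .inl hxy
  rcases hxz with hxz | hxz
  · exact .inr hxz
  exact absurd (hA hxy hxz) hyz

/-- Two `H`-edges `xy`, `xz` in a clique of `H ⊔ A` force `yz ∈ A`, so any fourth vertex `w` of the
clique is `H`-adjacent to both `y` and `z`, closing the 4-cycle `x y w z`. -/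
lemma false_of_isClique_sup_of_adj_of_adj (hT : TriangleFree H) (hC4 : C4Free H)
    (hA : IsMatchingGraph A) {S : Set V} (hS : (H ⊔ A).IsClique S) ⦃x y z w : V⦄
    (hy : y ∈ S) (hz : z ∈ S) (hw : w ∈ S) (hxw : x ≠ w) (hyz : y ≠ z) (hyw : y ≠ w)
    (hzw : z ≠ w) (hxy : H.Adj x y) (hxz : H.Adj x z) : False := by
  have hyz' : ¬ H.Adj y z := fun h => hT hxy h hxz
  have hyw' : H.Adj y w :=
    (hA.adj_or_adj_of_sup (hS hy hz hyz) (hS hy hw hyw) hzw).resolve_left hyz'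
  have hzw' : H.Adj z w :=
    (hA.adj_or_adj_of_sup (hS hz hy hyz.symm) (hS hz hw hzw) hyw).resolve_left (hyz' ·.symm)
  exact hC4 hxw hyz hxy hyw' hzw'.symm hxz.symm

lemma false_of_isClique_sup_of_four (hT : TriangleFree H) (hC4 : C4Free H)
    (hA : IsMatchingGraph A) {S : Set V} (hS : (H ⊔ A).IsClique S) :
    ∀ x ∈ S, ∀ y ∈ S, ∀ z ∈ S, ∀ w ∈ S,
      x ≠ y → x ≠ z → x ≠ w → y ≠ z → y ≠ w → z ≠ w → False := by
  intro x hx y hy z hz w hw hxy hxz hxw hyz hyw hzw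
  have hcycle := false_of_isClique_sup_of_adj_of_adj hT hC4 hA hS
  rcases hA.adj_or_adj_of_sup (hS hx hy hxy) (hS hx hz hxz) hyz with hxy' | hxz'
  · rcases hA.adj_or_adj_of_sup (hS hx hz hxz) (hS hx hw hxw) hzw with hxz' | hxw'
    · exact hcycle hy hz hw hxw hyz hyw hzw hxy' hxz'
    · exact hcycle hy hw hz hxz hyw hyz hzw.symm hxy' hxw'
  · rcases hA.adj_or_adj_of_sup (hS hx hy hxy) (hS hx hw hxw) hyw with hxy' | hxw'
    · exact hcycle hy hz hw hxw hyz hyw hzw hxy' hxz'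
    · exact hcycle hz hw hy hxy hzw hyz.symm hyw.symm hxz' hxw'

lemma exists_P3Comp_of_isClique_sup (hT : TriangleFree H) (hA : IsMatchingGraph A)
    {c : H.ConnectedComponent} (hS : (H ⊔ A).IsClique c.supp) {v x y : V}
    (hc : c.supp = {v, x, y}) (hvx : v ≠ x) (hvy : v ≠ y) (hxy : x ≠ y) :
    ∃ u m w, P3Comp H c u m w ∧ A.Adj u w := by
  have hv : v ∈ c.supp := by simp [hc]
  have hx : x ∈ c.supp := by simp [hc]
  have hy : y ∈ c.supp := by simp [hc]
  rcases hS hv hx hvx with h₁ | h₁ <;> rcases hS hv hy hvy with h₂ | h₂ <;>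
    rcases hS hx hy hxy with h₃ | h₃
  · exact (hT h₁ h₃ h₂).elim
  · exact ⟨x, v, y, ⟨h₁.symm, h₂, hxy, fun h => hT h₁ h h₂, by rw [hc, Set.insert_comm]⟩, h₃⟩
  · exact ⟨v, x, y, ⟨h₁, h₃, hvy, fun h => hT h₁ h₃ h, hc⟩, h₂⟩
  · exact (hvx (hA h₂.symm h₃.symm)).elim
  · exact ⟨v, y, x, ⟨h₂, h₃.symm, hvx, fun h => hT h₂ h₃.symm h, by rw [hc, Set.pair_comm]⟩, h₁⟩
  · exact (hvy (hA h₁.symm h₃)).elim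
  · exact (hxy (hA h₁ h₂)).elim
  · exact (hxy (hA h₁ h₂)).elim

end SupMatching

theorem exists_delMatching_of_hasSolution {G : SimpleGraph V} {a d : V → ℕ}
    (hT : TriangleFree G) (hC4 : C4Free G) (h : HasSolution G a d) :
    ∃ D : SimpleGraph V, DelMatching G D d ∧
      ∀ c : (G \ D).ConnectedComponent,
        P1Comp (G \ D) c ∨ P2Comp (G \ D) c ∨
        (∃ u m w, P3Comp (G \ D) c u m w ∧ a u = 1 ∧ a w = 1) := by
  obtain ⟨D, A, hD, ⟨-, hA, haA⟩, hclu⟩ := h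
  refine ⟨D, hD, fun c => ?_⟩
  have hT' := hT.mono (sdiff_le : G \ D ≤ G)
  have hclique : ((G \ D) ⊔ A).IsClique c.supp := fun x hx y hy hxy =>
    hclu.adj_of_reachable ((ConnectedComponent.exact (hx.trans hy.symm)).mono le_sup_left) hxy
  obtain ⟨v, rfl⟩ := c.exists_rep
  rcases Set.eq_singleton_or_pair_or_triple ConnectedComponent.connectedComponentMk_mem
      (false_of_isClique_sup_of_four hT' (hC4.mono sdiff_le) hA hclique)
    with hc | ⟨x, hvx, hc⟩ | ⟨x, y, hvx, hvy, hxy, hc⟩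
  · exact .inl ⟨v, hc⟩
  · exact .inr (.inl ⟨v, x, ConnectedComponent.adj_of_supp_eq_pair hc hvx, hc⟩)
  · obtain ⟨u, m, w, hP, huw⟩ := exists_P3Comp_of_isClique_sup hT' hA hclique hc hvx hvy hxy
    exact .inr (.inr ⟨u, m, w, hP, haA huw⟩)

section Components

variable {H : SimpleGraph V} {c : H.ConnectedComponent} {x y : V}

lemma P2Comp.adj_of_mem (h : P2Comp H c) (hx : x ∈ c.supp) (hy : y ∈ c.supp) (hxy : x ≠ y) :
    H.Adj x y := by
  obtain ⟨u, v, huv, hc⟩ := h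
  rw [hc] at hx hy
  rcases hx with rfl | rfl <;> rcases hy with rfl | rfl
  exacts [absurd rfl hxy, huv, huv.symm, absurd rfl hxy]

lemma P3Comp.sym2_eq_of_not_adj {u m w : V} (h : P3Comp H c u m w) (hx : x ∈ c.supp)
    (hy : y ∈ c.supp) (hxy : x ≠ y) (hnadj : ¬ H.Adj x y) : s(x, y) = s(u, w) := by
  obtain ⟨hum, hmw, -, -, hc⟩ := h
  rw [hc] at hx hy
  rcases hx with rfl | rfl | rfl <;> rcases hy with rfl | rfl | rfl <;>
    simp_all [adj_comm, Sym2.eq_swap]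

lemma P3Comp.sym2_eq {u m w u' m' w' : V} (h : P3Comp H c u m w) (h' : P3Comp H c u' m' w') :
    s(u', w') = s(u, w) := by
  obtain ⟨-, -, hne', hnadj', hc'⟩ := h'
  exact h.sym2_eq_of_not_adj (by simp [hc']) (by simp [hc']) hne' hnadj'

lemma exists_P3Comp_of_not_adj {a : V → ℕ}
    (hc : P1Comp H c ∨ P2Comp H c ∨ ∃ u m w, P3Comp H c u m w ∧ a u = 1 ∧ a w = 1)
    (hx : x ∈ c.supp) (hy : y ∈ c.supp) (hxy : x ≠ y) (hnadj : ¬ H.Adj x y) :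
    ∃ u m w, P3Comp H c u m w ∧ a u = 1 ∧ a w = 1 ∧ s(x, y) = s(u, w) := by
  rcases hc with ⟨v, hc⟩ | hc | ⟨u, m, w, hP, hau, haw⟩
  · rw [hc] at hx hy
    exact (hxy (hx.trans hy.symm)).elim
  · exact (hnadj (hc.adj_of_mem hx hy hxy)).elim
  · exact ⟨u, m, w, hP, hau, haw, hP.sym2_eq_of_not_adj hx hy hxy hnadj⟩

end Components

/-- The added graph `fromRel H.Reachable \ H` joins every non-adjacent pair inside a component
of `H = G \ D`, which in a `P₃` component is exactly the pair of its ends. -/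
theorem hasSolution_of_delMatching {G D : SimpleGraph V} {a d : V → ℕ} (hT : TriangleFree G)
    (hD : DelMatching G D d)
    (hcomp : ∀ c : (G \ D).ConnectedComponent,
      P1Comp (G \ D) c ∨ P2Comp (G \ D) c ∨
      (∃ u m w, P3Comp (G \ D) c u m w ∧ a u = 1 ∧ a w = 1)) :
    HasSolution G a d := by
  set H := G \ D
  have hends : ∀ ⦃x y⦄, (fromRel H.Reachable \ H).Adj x y → ∃ u m w,
      P3Comp H (H.connectedComponentMk x) u m w ∧ a u = 1 ∧ a w = 1 ∧ s(x, y) = s(u, w) := by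
    rintro x y ⟨⟨hxy, hr⟩, hnadj⟩
    have hr : H.Reachable y x := hr.elim .symm id
    exact exists_P3Comp_of_not_adj (hcomp _) rfl (ConnectedComponent.sound hr) hxy hnadj
  refine ⟨D, fromRel H.Reachable \ H, hD, ⟨fun x y hxy => ?_, fun x y y' hy hy' => ?_,
    fun x y hxy => ?_⟩, ?_⟩
  · obtain ⟨u, m, w, ⟨hum, hmw, -⟩, -, -, he⟩ := hends hxy
    refine ⟨hxy.ne, fun hG => ?_⟩
    rcases Sym2.eq_iff.1 he with ⟨rfl, rfl⟩ | ⟨rfl, rfl⟩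
    exacts [hT hum.1 hmw.1 hG, hT hum.1 hmw.1 hG.symm]
  · obtain ⟨u, m, w, hP, -, -, he⟩ := hends hy
    obtain ⟨u', m', w', hP', -, -, he'⟩ := hends hy'
    exact (Sym2.congr_right.1 (he'.trans ((hP.sym2_eq hP').trans he.symm))).symm
  · obtain ⟨u, m, w, -, hau, haw, he⟩ := hends hxy
    rcases Sym2.eq_iff.1 he with ⟨rfl, rfl⟩ | ⟨rfl, rfl⟩
    exacts [⟨hau, haw⟩, ⟨haw, hau⟩]
  · rw [sup_sdiff_cancel_right fun x y h => ⟨h.ne, .inl h.reachable⟩]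
    exact isClusterGraph_fromRel_reachable H

theorem stmt_3_general {V : Type*} (G : SimpleGraph V)
    (a d : V → ℕ)
    (hT : TriangleFree G) (hC4 : C4Free G) :
    HasSolution G a d ↔
      ∃ D : SimpleGraph V, DelMatching G D d ∧
        ∀ c : (G \ D).ConnectedComponent,
          P1Comp (G \ D) c ∨ P2Comp (G \ D) c ∨
          (∃ u m w, P3Comp (G \ D) c u m w ∧ a u = 1 ∧ a w = 1) :=
  ⟨exists_delMatching_of_hasSolution hT hC4,
    fun ⟨_, hD, hcomp⟩ => hasSolution_of_delMatching hT hD hcomp⟩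

/-- characterization of YES-instances for {C₃,C₄}-free graphs of
maximum degree at most 3. -/
theorem stmt_3 {V : Type*} [Fintype V] [DecidableEq V] (G : SimpleGraph V)
    (a d : V → ℕ) (ha : ∀ v, a v ≤ 1) (hd : ∀ v, d v ≤ 1)
    (hT : TriangleFree G) (hC4 : C4Free G) (hdeg : MaxDegLE G 3) :
    HasSolution G a d ↔
      ∃ D : SimpleGraph V, DelMatching G D d ∧
        ∀ c : (G \ D).ConnectedComponent,
          P1Comp (G \ D) c ∨ P2Comp (G \ D) c ∨
          (∃ u m w, P3Comp (G \ D) c u m w ∧ a u = 1 ∧ a w = 1) :=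
  stmt_3_general G a d hT hC4
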